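/- Equip ℝ⁶ with the standard inner product ⟨·,·⟩, with orthonormal standard basis e₁, …, e₆, and with the 2-step nilpotent Lie bracket β = β_{a,b,p,q} for real numbers a, b, p, q. Let ∇ : ℝ⁶ × ℝ⁶ → ℝ⁶ be the unique bilinear map satisfying ⟨∇(x,y), z⟩ = ½(⟨β(x,y), z⟩ − ⟨β(y,z), x⟩ + ⟨β(z,x), y⟩) for all x, y, z (the Levi-Civita connection of the associated left-invariant metric), and define R(x,y)z = ∇(β(x,y), z) − ∇(x, ∇(y,z)) + ∇(y, ∇(x,z)). Then ⟨R(e₁,e₂)e₁, e₂⟩ = −¾(a+p)², ⟨R(e₃,e₄)e₃, e₄⟩ = −¾(a−p)², ⟨R(e₂,e₄)e₂, e₄⟩ = −¾(b−q)², ⟨R(e₁,e₅)e₁, e₅⟩ = ¼(a+p)², and ⟨R(e₁,e₆)e₁, e₆⟩ = ¼(b+q)². -/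
import Mathlib


open Matrix

/-- The 2-step nilpotent bracket `β_{a,b,p,q}` on `ℝ⁶`, with
`β(e₁,e₂) = (a+p)e₅`, `β(e₃,e₄) = (a−p)e₅`, `β(e₁,e₃) = (b+q)e₆`, `β(e₂,e₄) = −(b−q)e₆`. -/
noncomputable def betaBr (a b p q : ℝ) (x y : Fin 6 → ℝ) : Fin 6 → ℝ :=
  ((a + p) * (x 0 * y 1 - x 1 * y 0) + (a - p) * (x 2 * y 3 - x 3 * y 2)) •
    (Pi.single 4 1 : Fin 6 → ℝ) +
  ((b + q) * (x 0 * y 2 - x 2 * y 0) - (b - q) * (x 1 * y 3 - x 3 * y 1)) •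
    (Pi.single 5 1 : Fin 6 → ℝ)

set_option maxHeartbeats 2000000 in
/-- components of the Riemannian curvature tensor of the metric 2-step nilpotent
Lie algebra `(ℝ⁶, β_{a,b,p,q}, ⟨·,·⟩)`, where `∇` is the Levi-Civita connection, determined by
`⟨∇(x,y),z⟩ = ½(⟨β(x,y),z⟩ − ⟨β(y,z),x⟩ + ⟨β(z,x),y⟩)`, and
`R(x,y)z = ∇(β(x,y),z) − ∇(x,∇(y,z)) + ∇(y,∇(x,z))`:
`R₁₂₁₂ = −¾(a+p)²`, `R₃₄₃₄ = −¾(a−p)²`, `R₂₄₂₄ = −¾(b−q)²`, `R₁₅₁₅ = ¼(a+p)²`,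
`R₁₆₁₆ = ¼(b+q)²`. -/
theorem curvature_components (a b p q : ℝ)
    (nabla : (Fin 6 → ℝ) → (Fin 6 → ℝ) → (Fin 6 → ℝ))
    (hnabla : ∀ x y z : Fin 6 → ℝ, nabla x y ⬝ᵥ z =
      ((betaBr a b p q x y ⬝ᵥ z) - (betaBr a b p q y z ⬝ᵥ x) + (betaBr a b p q z x ⬝ᵥ y)) / 2) :
    let R : (Fin 6 → ℝ) → (Fin 6 → ℝ) → (Fin 6 → ℝ) → (Fin 6 → ℝ) := fun x y z =>
      nabla (betaBr a b p q x y) z - nabla x (nabla y z) + nabla y (nabla x z)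
    let e : Fin 6 → (Fin 6 → ℝ) := fun i => Pi.single i 1
    (R (e 0) (e 1) (e 0) ⬝ᵥ e 1 = -(3 / 4) * (a + p) ^ 2) ∧
    (R (e 2) (e 3) (e 2) ⬝ᵥ e 3 = -(3 / 4) * (a - p) ^ 2) ∧
    (R (e 1) (e 3) (e 1) ⬝ᵥ e 3 = -(3 / 4) * (b - q) ^ 2) ∧
    (R (e 0) (e 4) (e 0) ⬝ᵥ e 4 = (1 / 4) * (a + p) ^ 2) ∧
    (R (e 0) (e 5) (e 0) ⬝ᵥ e 5 = (1 / 4) * (b + q) ^ 2) := by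
  intro R e
  have hc : ∀ (x y : Fin 6 → ℝ) (k : Fin 6), nabla x y k =
      ((betaBr a b p q x y ⬝ᵥ Pi.single k 1) - (betaBr a b p q y (Pi.single k 1) ⬝ᵥ x)
        + (betaBr a b p q (Pi.single k 1) x ⬝ᵥ y)) / 2 := by
    intro x y k
    have h := hnabla x y (Pi.single k 1)
    rwa [dotProduct_single, mul_one] at h
  have h00 : nabla (e 0) (e 0) = 0 := by
    funext k
    rw [hc]
    fin_cases k <;> simp [betaBr, e, dotProduct, Fin.sum_univ_six]
  have h11 : nabla (e 1) (e 1) = 0 := by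
    funext k
    rw [hc]
    fin_cases k <;> simp [betaBr, e, dotProduct, Fin.sum_univ_six]
  have h22 : nabla (e 2) (e 2) = 0 := by
    funext k
    rw [hc]
    fin_cases k <;> simp [betaBr, e, dotProduct, Fin.sum_univ_six]
  have h10 : nabla (e 1) (e 0) = (-(a + p) / 2) • (Pi.single 4 1 : Fin 6 → ℝ) := by
    funext k
    rw [hc]
    fin_cases k <;> (simp [betaBr, e, dotProduct, Fin.sum_univ_six]; try ring)
  have h32 : nabla (e 3) (e 2) = (-(a - p) / 2) • (Pi.single 4 1 : Fin 6 → ℝ) := by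
    funext k
    rw [hc]
    fin_cases k <;> (simp [betaBr, e, dotProduct, Fin.sum_univ_six]; try ring)
  have h31 : nabla (e 3) (e 1) = ((b - q) / 2) • (Pi.single 5 1 : Fin 6 → ℝ) := by
    funext k
    rw [hc]
    fin_cases k <;> (simp [betaBr, e, dotProduct, Fin.sum_univ_six]; try ring)
  have h40 : nabla (e 4) (e 0) = (-(a + p) / 2) • (Pi.single 1 1 : Fin 6 → ℝ) := by
    funext k
    rw [hc]
    fin_cases k <;> (simp [betaBr, e, dotProduct, Fin.sum_univ_six]; try ring)
  have h50 : nabla (e 5) (e 0) = (-(b + q) / 2) • (Pi.single 2 1 : Fin 6 → ℝ) := by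
    funext k
    rw [hc]
    fin_cases k <;> (simp [betaBr, e, dotProduct, Fin.sum_univ_six]; try ring)
  refine ⟨?_, ?_, ?_, ?_, ?_⟩
  · rw [add_dotProduct, sub_dotProduct, h10, h00, hnabla, hnabla, hnabla]
    simp [betaBr, e, dotProduct, Fin.sum_univ_six]
    ring
  · rw [add_dotProduct, sub_dotProduct, h32, h22, hnabla, hnabla, hnabla]
    simp [betaBr, e, dotProduct, Fin.sum_univ_six]
    ring
  · rw [add_dotProduct, sub_dotProduct, h31, h11, hnabla, hnabla, hnabla]
    simp [betaBr, e, dotProduct, Fin.sum_univ_six]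
    ring
  · rw [add_dotProduct, sub_dotProduct, h40, h00, hnabla, hnabla, hnabla]
    simp [betaBr, e, dotProduct, Fin.sum_univ_six]
    ring
  · rw [add_dotProduct, sub_dotProduct, h50, h00, hnabla, hnabla, hnabla]
    simp [betaBr, e, dotProduct, Fin.sum_univ_six]
    ring
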